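/- Under the stated assumptions, the mean squared ambiguity function has the closed form E[|χ(τ,ν)|²] = Σ_{|n| < L} α_n(ν) · |ψ(τ + nT, ν)|², where α_0(ν) = L(μ₄ − 1) + |Σ_{m=0}^{L−1} exp(−2πi·m·ν·T)|² and α_n(ν) = L − |n| for 0 < |n| < L. -/

import Mathlib

/-!
Expanding `|χ|²` gives `Σ E[s_n s̄_m s̄_p s_q] ψ_{n,m} conj ψ_{p,q}`. By independence a fourth
moment in which some index occurs only once vanishes, since the symbols are centred; otherwise the
indices pair up, and `E[s_n s̄_m s̄_p s_q] = [n=m][p=q] + [n=p][m=q] + (μ₄ - 2)[n=m=p=q]`, the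
third pairing `n = q, m = p` dropping out because `E[s²] = 0`. The pairing `n = m, p = q` yields
`|Σ_n ψ_{n,n}|² = |Σ_n exp(-2πinνT)|² |ψ(τ,ν)|²`, and the pairing `n = p, m = q` yields
`Σ_{n,m} |ψ(τ + (m-n)T, ν)|²`, in which the lag `k = m - n` occurs `L - |k|` times.
-/

open MeasureTheory ProbabilityTheory Complex

/-- The cross-ambiguity function between the `n`-th and `m`-th time-shifted pulses:
`ψ_{n,m}(τ,ν) = exp(−2πi·n·ν·T) · ψ(τ + (m−n)·T, ν)`. -/
noncomputable def psiNM (ψ : ℝ × ℝ → ℂ) (T τ ν : ℝ) (n m : ℕ) : ℂ :=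
  Complex.exp (-2 * Real.pi * Complex.I * n * ν * T) * ψ (τ + ((m : ℝ) - n) * T, ν)

/-- The ambiguity function of the frame signal:
`χ(τ,ν) = Σ_n Σ_m s_n conj(s_m) ψ_{n,m}(τ,ν)`. -/
noncomputable def chi {Ω : Type*} (L : ℕ) (ψ : ℝ × ℝ → ℂ) (T τ ν : ℝ)
    (s : Fin L → Ω → ℂ) (ω : Ω) : ℂ :=
  ∑ n : Fin L, ∑ m : Fin L, s n ω * (starRingEnd ℂ) (s m ω) * psiNM ψ T τ ν n m

/-- The weighting coefficients: `α_0(ν) = L(μ₄ − 1) + |Σ_{m<L} exp(−2πi·m·ν·T)|²` and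
`α_n(ν) = L − |n|` for `n ≠ 0`. -/
noncomputable def alphaCoef (L : ℕ) (μ₄ T ν : ℝ) (n : ℤ) : ℝ :=
  if n = 0 then
    L * (μ₄ - 1) +
      (norm (∑ m : Fin L, Complex.exp (-2 * Real.pi * Complex.I * (m : ℕ) * ν * T))) ^ 2
  else (L : ℝ) - |(n : ℝ)|

open Finset
open scoped ComplexConjugate

lemma ProbabilityTheory.iIndepFun.indepFun_prodMk₃ {Ω ι β : Type*} {mΩ : MeasurableSpace Ω}
    {μ : Measure Ω} [MeasurableSpace β] {f : ι → Ω → β} (h : iIndepFun f μ)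
    (hf : ∀ i, Measurable (f i)) {i j k l : ι} (hil : i ≠ l) (hjl : j ≠ l) (hkl : k ≠ l) :
    IndepFun (fun ω ↦ (f i ω, f j ω, f k ω)) (f l) μ := by
  classical
  refine (h.indepFun_finset {i, j, k} {l} (by simp [hil.symm, hjl.symm, hkl.symm]) hf).comp
    (φ := fun v ↦ (v ⟨i, by simp⟩, v ⟨j, by simp⟩, v ⟨k, by simp⟩)) (ψ := fun v ↦ v ⟨l, by simp⟩)
    ?_ ?_ <;> fun_prop

def HasLoneIndex {ι : Type*} (n m p q : ι) : Prop :=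
  (m ≠ n ∧ p ≠ n ∧ q ≠ n) ∨ (n ≠ m ∧ p ≠ m ∧ q ≠ m) ∨ (n ≠ p ∧ m ≠ p ∧ q ≠ p) ∨
    (n ≠ q ∧ m ≠ q ∧ p ≠ q)

lemma paired_or_hasLoneIndex {ι : Type*} (n m p q : ι) :
    (n = m ∧ n = p ∧ n = q) ∨ (n = m ∧ p = q ∧ n ≠ p) ∨ (n = p ∧ m = q ∧ n ≠ m) ∨
      (n = q ∧ m = p ∧ n ≠ m) ∨ HasLoneIndex n m p q := by
  unfold HasLoneIndex
  grind

/-- `E[s_n s̄_m s̄_p s_q]` for independent centred symbols with `E[s²] = 0`, `E|s|² = 1` and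
`E|s|⁴ = μ₄`. -/
def fourthMoment {ι : Type*} [DecidableEq ι] (μ₄ : ℝ) (n m p q : ι) : ℂ :=
  (if n = m ∧ p = q then 1 else 0) + (if n = p ∧ m = q then 1 else 0) +
    (if n = m ∧ n = p ∧ n = q then (μ₄ : ℂ) - 2 else 0)

section Moments

variable {Ω ι : Type*} {mΩ : MeasurableSpace Ω} {μ : Measure Ω} {s : ι → Ω → ℂ}

theorem integral_mul_conj_mul_conj_mul_eq_zero (hmeas : ∀ n, Measurable (s n))
    (hindep : iIndepFun s μ) (hmean : ∀ n, ∫ ω, s n ω ∂μ = 0) {n m p q : ι}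
    (h : HasLoneIndex n m p q) :
    ∫ ω, s n ω * conj (s m ω) * conj (s p ω) * s q ω ∂μ = 0 := by
  have hlone {i j k l : ι} (hil : i ≠ l) (hjl : j ≠ l) (hkl : k ≠ l) {f : ℂ × ℂ × ℂ → ℂ}
      {g : ℂ → ℂ} (hf : Measurable f) (hg : Measurable g) (hg₀ : ∫ ω, g (s l ω) ∂μ = 0) :
      ∫ ω, f (s i ω, s j ω, s k ω) * g (s l ω) ∂μ = 0 := by
    rw [(hindep.indepFun_prodMk₃ hmeas hil hjl hkl).integral_fun_comp_mul_comp
      (by fun_prop) (hmeas l).aemeasurable hf.aestronglyMeasurable hg.aestronglyMeasurable,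
      hg₀, mul_zero]
  have hconj (n : ι) : ∫ ω, conj (s n ω) ∂μ = 0 := by rw [integral_conj, hmean, map_zero]
  rcases h with ⟨hmn, hpn, hqn⟩ | ⟨hnm, hpm, hqm⟩ | ⟨hnp, hmp, hqp⟩ | ⟨hnq, hmq, hpq⟩
  · rw [← hlone hmn hpn hqn (f := fun x ↦ conj x.1 * conj x.2.1 * x.2.2) (g := fun z ↦ z)
      (by fun_prop) (by fun_prop) (hmean n)]
    congr 1; ext ω; ring
  · rw [← hlone hnm hpm hqm (f := fun x ↦ x.1 * conj x.2.1 * x.2.2) (by fun_prop)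
      (by fun_prop) (hconj m)]
    congr 1; ext ω; ring
  · rw [← hlone hnp hmp hqp (f := fun x ↦ x.1 * conj x.2.1 * x.2.2) (by fun_prop)
      (by fun_prop) (hconj p)]
    congr 1; ext ω; ring
  · exact hlone hnq hmq hpq (f := fun x ↦ x.1 * conj x.2.1 * conj x.2.2) (g := fun z ↦ z)
      (by fun_prop) (by fun_prop) (hmean q)

theorem integral_mul_conj_mul_conj_mul [DecidableEq ι] {μ₄ : ℝ}
    (hmeas : ∀ n, Measurable (s n)) (hindep : iIndepFun s μ)
    (hmean : ∀ n, ∫ ω, s n ω ∂μ = 0) (hpseudo : ∀ n, ∫ ω, s n ω ^ 2 ∂μ = 0)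
    (hE2 : ∀ n, ∫ ω, ‖s n ω‖ ^ 2 ∂μ = 1) (hE4 : ∀ n, ∫ ω, ‖s n ω‖ ^ 4 ∂μ = μ₄) (n m p q : ι) :
    ∫ ω, s n ω * conj (s m ω) * conj (s p ω) * s q ω ∂μ = fourthMoment μ₄ n m p q := by
  have hsq (n : ι) : ∫ ω, s n ω * conj (s n ω) ∂μ = 1 := by
    simp_rw [Complex.mul_conj', ← ofReal_pow, integral_complex_ofReal, hE2, ofReal_one]
  have hpair {n p : ι} (hnp : n ≠ p) {f g : ℂ → ℂ} (hf : Measurable f) (hg : Measurable g) :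
      ∫ ω, f (s n ω) * g (s p ω) ∂μ = (∫ ω, f (s n ω) ∂μ) * ∫ ω, g (s p ω) ∂μ :=
    (hindep.indepFun hnp).integral_fun_comp_mul_comp (hmeas n).aemeasurable
      (hmeas p).aemeasurable hf.aestronglyMeasurable hg.aestronglyMeasurable
  have hsq_mul_sq {n p : ι} (hnp : n ≠ p) :
      ∫ ω, s n ω * conj (s n ω) * (conj (s p ω) * s p ω) ∂μ = 1 := by
    rw [hpair hnp (f := fun z ↦ z * conj z) (g := fun z ↦ conj z * z) (by fun_prop)
      (by fun_prop), hsq]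
    simp_rw [mul_comm (conj _), hsq, one_mul]
  rcases paired_or_hasLoneIndex n m p q with
    ⟨rfl, rfl, rfl⟩ | ⟨rfl, rfl, hnp⟩ | ⟨rfl, rfl, hnm⟩ | ⟨rfl, rfl, hnm⟩ | hlone
  · calc ∫ ω, s n ω * conj (s n ω) * conj (s n ω) * s n ω ∂μ
        = ∫ ω, ((‖s n ω‖ ^ 4 : ℝ) : ℂ) ∂μ := by
          congr 1; ext ω
          rw [mul_assoc, Complex.conj_mul', Complex.mul_conj']; push_cast; ring
      _ = fourthMoment μ₄ n n n n := by
          rw [integral_complex_ofReal, hE4]; simp only [fourthMoment, and_self, ↓reduceIte]; ring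
  · calc ∫ ω, s n ω * conj (s n ω) * conj (s p ω) * s p ω ∂μ
        = ∫ ω, s n ω * conj (s n ω) * (conj (s p ω) * s p ω) ∂μ := by simp_rw [mul_assoc]
      _ = fourthMoment μ₄ n n p p := by rw [hsq_mul_sq hnp]; simp [fourthMoment, hnp]
  · calc ∫ ω, s n ω * conj (s m ω) * conj (s n ω) * s m ω ∂μ
        = ∫ ω, s n ω * conj (s n ω) * (conj (s m ω) * s m ω) ∂μ := by congr 1; ext ω; ring
      _ = fourthMoment μ₄ n m n m := by rw [hsq_mul_sq hnm]; simp [fourthMoment, hnm]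
  · calc ∫ ω, s n ω * conj (s m ω) * conj (s m ω) * s n ω ∂μ
        = ∫ ω, s n ω ^ 2 * conj (s m ω ^ 2) ∂μ := by congr 1; ext ω; rw [map_pow]; ring
      _ = fourthMoment μ₄ n m m n := by
          rw [hpair hnm (f := fun z ↦ z ^ 2) (g := fun z ↦ conj (z ^ 2)) (by fun_prop)
            (by fun_prop), hpseudo]
          simp [fourthMoment, hnm]
  · rw [integral_mul_conj_mul_conj_mul_eq_zero hmeas hindep hmean hlone]
    unfold HasLoneIndex at hlone
    grind [fourthMoment]

lemma MeasureTheory.MemLp.mul_conj_of_four {X Y : Ω → ℂ} (hX : MemLp X 4 μ) (hY : MemLp Y 4 μ) :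
    MemLp (fun ω ↦ X ω * conj (Y ω)) 2 μ :=
  have : ENNReal.HolderTriple 4 4 2 := ⟨by
    rw [show (4 : ENNReal) = 2 * 2 by norm_num, ENNReal.mul_inv (by simp) (by simp), ← two_mul,
      ← mul_assoc, ENNReal.mul_inv_cancel (by simp) (by simp), one_mul]⟩
  hY.star.mul' hX

theorem ofReal_integral_norm_sum_mul_sq {κ : Type*} (S : Finset κ) {Y : κ → Ω → ℂ}
    (hY : ∀ x, MemLp (Y x) 2 μ) (c : κ → ℂ) :
    ((∫ ω, ‖∑ x ∈ S, Y x ω * c x‖ ^ 2 ∂μ : ℝ) : ℂ) =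
      ∑ x ∈ S, ∑ y ∈ S, (∫ ω, Y x ω * conj (Y y ω) ∂μ) * (c x * conj (c y)) := by
  have hint (x y : κ) : Integrable (fun ω ↦ Y x ω * conj (Y y ω) * (c x * conj (c y))) μ :=
    ((hY x).integrable_mul (hY y).star).mul_const _
  calc ((∫ ω, ‖∑ x ∈ S, Y x ω * c x‖ ^ 2 ∂μ : ℝ) : ℂ)
      = ∫ ω, ∑ x ∈ S, ∑ y ∈ S, Y x ω * conj (Y y ω) * (c x * conj (c y)) ∂μ := by
        rw [← integral_complex_ofReal]
        congr 1; ext ω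
        rw [ofReal_pow, ← Complex.mul_conj', map_sum, sum_mul_sum]
        refine sum_congr rfl fun x _ ↦ sum_congr rfl fun y _ ↦ ?_
        rw [map_mul]; ring
    _ = _ := by
        rw [integral_finsetSum _ fun x _ ↦ integrable_finsetSum _ fun y _ ↦ hint x y]
        refine sum_congr rfl fun x _ ↦ ?_
        rw [integral_finsetSum _ fun y _ ↦ hint x y]
        exact sum_congr rfl fun y _ ↦ integral_mul_const _ _

theorem sum_fourthMoment_mul [Fintype ι] [DecidableEq ι] (μ₄ : ℝ) (c : ι → ι → ℂ) :
    ∑ n, ∑ m, ∑ p, ∑ q, fourthMoment μ₄ n m p q * c n m * conj (c p q) =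
      ((‖∑ n, c n n‖ ^ 2 + ∑ n, ∑ m, ‖c n m‖ ^ 2 + (μ₄ - 2) * ∑ n, ‖c n n‖ ^ 2 : ℝ) : ℂ) := by
  simp only [fourthMoment, ite_and, add_mul, ite_mul, one_mul, zero_mul, mul_assoc,
    sum_add_distrib, sum_ite_irrel, sum_ite_eq, mem_univ, ↓reduceIte, sum_const_zero, mul_sum,
    ofReal_add, ofReal_pow, ← Complex.mul_conj', map_sum, sum_mul, ofReal_sum, ofReal_mul,
    ofReal_sub, ofReal_ofNat, add_left_inj]
  exact sum_comm

theorem integral_norm_sesqForm_sq [Fintype ι] [DecidableEq ι] {μ₄ : ℝ}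
    (hmeas : ∀ n, Measurable (s n)) (hindep : iIndepFun s μ)
    (hmean : ∀ n, ∫ ω, s n ω ∂μ = 0) (hpseudo : ∀ n, ∫ ω, s n ω ^ 2 ∂μ = 0)
    (hE2 : ∀ n, ∫ ω, ‖s n ω‖ ^ 2 ∂μ = 1) (hmom4 : ∀ n, Integrable (fun ω ↦ ‖s n ω‖ ^ 4) μ)
    (hE4 : ∀ n, ∫ ω, ‖s n ω‖ ^ 4 ∂μ = μ₄) (c : ι → ι → ℂ) :
    ∫ ω, ‖∑ n, ∑ m, s n ω * conj (s m ω) * c n m‖ ^ 2 ∂μ =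
      ‖∑ n, c n n‖ ^ 2 + ∑ n, ∑ m, ‖c n m‖ ^ 2 + (μ₄ - 2) * ∑ n, ‖c n n‖ ^ 2 := by
  have hs4 (n : ι) : MemLp (s n) 4 μ :=
    (integrable_norm_rpow_iff (hmeas n).aestronglyMeasurable (by norm_num) (by norm_num)).1
      (by simpa using hmom4 n)
  have hpairs (ω : Ω) : ∑ n, ∑ m, s n ω * conj (s m ω) * c n m =
      ∑ x : ι × ι, s x.1 ω * conj (s x.2 ω) * c x.1 x.2 :=
    (Fintype.sum_prod_type' _).symm
  apply ofReal_injective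
  simp_rw [hpairs]
  rw [← sum_fourthMoment_mul, ofReal_integral_norm_sum_mul_sq univ
    (fun x : ι × ι ↦ (hs4 x.1).mul_conj_of_four (hs4 x.2)) fun x ↦ c x.1 x.2]
  simp only [Fintype.sum_prod_type, map_mul, conj_conj, ← mul_assoc,
    integral_mul_conj_mul_conj_mul hmeas hindep hmean hpseudo hE2 hE4]

end Moments

lemma norm_psiNM (ψ : ℝ × ℝ → ℂ) (T τ ν : ℝ) (n m : ℕ) :
    ‖psiNM ψ T τ ν n m‖ = ‖ψ (τ + ((m : ℝ) - n) * T, ν)‖ := by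
  simp [psiNM, Complex.norm_exp]

lemma sum_psiNM_self (ψ : ℝ × ℝ → ℂ) (T τ ν : ℝ) (L : ℕ) :
    ∑ n : Fin L, psiNM ψ T τ ν n n =
      (∑ n : Fin L, Complex.exp (-2 * Real.pi * Complex.I * (n : ℕ) * ν * T)) * ψ (τ, ν) := by
  simp [psiNM, sum_mul]

lemma alphaCoef_eq (L : ℕ) (μ₄ T ν : ℝ) (k : ℤ) :
    alphaCoef L μ₄ T ν k = (L - |(k : ℝ)|) + if k = 0 then L * (μ₄ - 2) +
      ‖∑ m : Fin L, Complex.exp (-2 * Real.pi * Complex.I * (m : ℕ) * ν * T)‖ ^ 2 else 0 := by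
  unfold alphaCoef
  split_ifs with hk
  · simp only [hk, Int.cast_zero, abs_zero, sub_zero]; ring
  · rw [add_zero]

lemma card_filter_sub_eq (L : ℕ) {k : ℤ} (hk : k ∈ Ioo (-(L : ℤ)) L) :
    #{x ∈ range L ×ˢ range L | (x.2 : ℤ) - x.1 = k} = L - k.natAbs := by
  rw [mem_Ioo] at hk
  rw [← card_range (L - k.natAbs)]
  refine card_bij' (fun x _ ↦ min x.1 x.2)
    (fun n _ ↦ if 0 ≤ k then (n, n + k.natAbs) else (n + k.natAbs, n)) ?_ ?_ ?_ ?_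
  · intro x hx
    simp only [mem_filter, mem_product, mem_range] at hx ⊢
    omega
  · intro n hn
    simp only [mem_range] at hn
    split_ifs <;> simp only [mem_filter, mem_product, mem_range] <;> omega
  · intro x hx
    simp only [mem_filter, mem_product, mem_range] at hx
    split_ifs <;> ext <;> simp only <;> omega
  · intro n hn
    split_ifs <;> simp only <;> omega

theorem Fin.sum_sum_sub_eq_sum_Ioo {M : Type*} [AddCommGroup M] (L : ℕ) (g : ℤ → M) :
    ∑ n : Fin L, ∑ m : Fin L, g (m - n) = ∑ k ∈ Ioo (-(L : ℤ)) L, ((L : ℤ) - |k|) • g k := by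
  have hrange (n : ℕ) : ∑ m : Fin L, g (m - n) = ∑ m ∈ range L, g (m - n) :=
    Fin.sum_univ_eq_sum_range (fun m ↦ g (m - n)) L
  simp only [hrange]
  rw [Fin.sum_univ_eq_sum_range (fun n ↦ ∑ m ∈ range L, g (m - n)), ← sum_product',
    ← sum_fiberwise_of_maps_to (g := fun x : ℕ × ℕ ↦ (x.2 : ℤ) - x.1) (t := Ioo (-(L : ℤ)) L)]
  · refine sum_congr rfl fun k hk ↦ ?_
    rw [sum_congr rfl fun x hx ↦ by rw [(mem_filter.1 hx).2], Finset.sum_const,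
      card_filter_sub_eq L hk, ← natCast_zsmul]
    rw [mem_Ioo] at hk
    congr 1
    rw [Int.abs_eq_natAbs]
    omega
  · intro x hx
    simp only [mem_product, mem_range] at hx
    simp only [mem_Ioo]
    omega

theorem mean_squared_ambiguity_closed_form_general
    {Ω : Type*} [MeasureSpace Ω]
    (L : ℕ) (T : ℝ) (τ ν : ℝ)
    (ψ : ℝ × ℝ → ℂ) (s : Fin L → Ω → ℂ) (μ₄ : ℝ)
    (hmeas : ∀ n : Fin L, Measurable (s n))
    (hindep : iIndepFun s ℙ)
    (hmean : ∀ n : Fin L, ∫ ω, s n ω ∂ℙ = 0)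
    (hpseudo : ∀ n : Fin L, ∫ ω, (s n ω) ^ 2 ∂ℙ = 0)
    (hE2 : ∀ n : Fin L, ∫ ω, (norm (s n ω)) ^ 2 ∂ℙ = 1)
    (hmom4 : ∀ n : Fin L, Integrable (fun ω => (norm (s n ω)) ^ 4) ℙ)
    (hE4 : ∀ n : Fin L, ∫ ω, (norm (s n ω)) ^ 4 ∂ℙ = μ₄) :
    (∫ ω, (norm (chi L ψ T τ ν s ω)) ^ 2 ∂ℙ)
      = ∑ n ∈ Finset.Ioo (-(L : ℤ)) (L : ℤ),
          alphaCoef L μ₄ T ν n * (norm (ψ (τ + n * T, ν))) ^ 2 := by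
  obtain rfl | hL := L.eq_zero_or_pos
  · simp [chi]
  set A := ∑ m : Fin L, Complex.exp (-2 * Real.pi * Complex.I * (m : ℕ) * ν * T)
  set g : ℤ → ℝ := fun k ↦ ‖ψ (τ + k * T, ν)‖ ^ 2
  calc ∫ ω, ‖chi L ψ T τ ν s ω‖ ^ 2 ∂ℙ
      = ‖A‖ ^ 2 * g 0 + ∑ n : Fin L, ∑ m : Fin L, g (m - n) + (μ₄ - 2) * (L * g 0) := by
        unfold chi
        rw [integral_norm_sesqForm_sq hmeas hindep hmean hpseudo hE2 hmom4 hE4, sum_psiNM_self]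
        simp only [norm_mul, mul_pow, norm_psiNM, g, sub_self, zero_mul, add_zero, Int.cast_zero,
          Int.cast_sub, Int.cast_natCast, Finset.sum_const, card_univ, Fintype.card_fin,
          nsmul_eq_mul]
        rfl
    _ = ∑ k ∈ Ioo (-(L : ℤ)) L,
          ((L - |(k : ℝ)|) * g k + if k = 0 then (L * (μ₄ - 2) + ‖A‖ ^ 2) * g k else 0) := by
        rw [Fin.sum_sum_sub_eq_sum_Ioo, sum_add_distrib, sum_ite_eq', if_pos (by simp [hL])]
        simp only [zsmul_eq_mul, Int.cast_sub, Int.cast_natCast, Int.cast_abs]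
        ring
    _ = _ := by simp only [alphaCoef_eq, add_mul, ite_mul, zero_mul, A, g]

/-- The mean squared ambiguity function has the closed form
`E[|χ(τ,ν)|²] = Σ_{|n| < L} α_n(ν) · |ψ(τ + nT, ν)|²`. -/
theorem mean_squared_ambiguity_closed_form
    {Ω : Type*} [MeasureSpace Ω] [IsProbabilityMeasure (ℙ : Measure Ω)]
    (L : ℕ) (hL : 1 ≤ L) (T : ℝ) (hT : 0 < T) (τ ν : ℝ)
    (ψ : ℝ × ℝ → ℂ) (s : Fin L → Ω → ℂ) (μ₄ : ℝ) (hμ₄ : 1 ≤ μ₄)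
    (hmeas : ∀ n : Fin L, Measurable (s n))
    (hindep : iIndepFun s ℙ)
    (hmean : ∀ n : Fin L, ∫ ω, s n ω ∂ℙ = 0)
    (hpseudo : ∀ n : Fin L, ∫ ω, (s n ω) ^ 2 ∂ℙ = 0)
    (hE2 : ∀ n : Fin L, ∫ ω, (norm (s n ω)) ^ 2 ∂ℙ = 1)
    (hmom4 : ∀ n : Fin L, Integrable (fun ω => (norm (s n ω)) ^ 4) ℙ)
    (hE4 : ∀ n : Fin L, ∫ ω, (norm (s n ω)) ^ 4 ∂ℙ = μ₄) :
    (∫ ω, (norm (chi L ψ T τ ν s ω)) ^ 2 ∂ℙ)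
      = ∑ n ∈ Finset.Ioo (-(L : ℤ)) (L : ℤ),
          alphaCoef L μ₄ T ν n * (norm (ψ (τ + n * T, ν))) ^ 2 :=
  mean_squared_ambiguity_closed_form_general L T τ ν ψ s μ₄ hmeas hindep hmean hpseudo hE2 hmom4 hE4
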